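/- arXiv:2103.11552 — 3 statements merged into one kernel-verified Lean document; each statement's English description precedes it below -/
import Mathlib

section
/- Let a, ã > 0 and D, D̃ ∈ GL⁺(3,ℝ) (real 3×3 matrices with positive determinant). Suppose that a²·(D Dᵗ)⁻¹/det(D⁻¹)^{2/3} = ã²·(D̃ D̃ᵗ)⁻¹/det(D̃⁻¹)^{2/3} and ã³·det(D⁻¹) = a³·det(D̃⁻¹). Then ã = a and there exists A ∈ SO(3) with D̃ = D·A. Conversely, if ã = a and D̃ = D·A for some A ∈ SO(3), then both equations hold. -/
/-! Taking determinants of the metric equation leaves `a⁶ = ã⁶` (the factor `det(D⁻¹)^{2/3}`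
is exactly what makes the determinant independent of `D`), so `ã = a`; the volume equation
then gives `det D̃ = det D`, the metric equation reduces to `D Dᵀ = D̃ D̃ᵀ`, and `A = D⁻¹ D̃`
is the required rotation. -/

open Matrix

namespace Matrix

variable {n K : Type*} [Fintype n] [DecidableEq n]

theorem det_inv_eq_inv_det [Field K] (D : Matrix n n K) : D⁻¹.det = D.det⁻¹ := by
  rw [det_nonsing_inv, Ring.inverse_eq_inv']

variable [CommRing K]

theorem det_mul_transpose_self (D : Matrix n n K) : (D * Dᵀ).det = D.det ^ 2 := by
  rw [det_mul, det_transpose, sq]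

theorem mul_mul_transpose_eq_of_mul_transpose_eq_one (D : Matrix n n K) {A : Matrix n n K}
    (hA : A * Aᵀ = 1) : D * A * (D * A)ᵀ = D * Dᵀ := by
  rw [transpose_mul, Matrix.mul_assoc, ← Matrix.mul_assoc A, hA, Matrix.one_mul]

theorem inv_mul_mul_transpose_eq_one {D D' : Matrix n n K} (hD : IsUnit D.det)
    (h : D * Dᵀ = D' * D'ᵀ) : D⁻¹ * D' * (D⁻¹ * D')ᵀ = 1 := by
  have hDt : IsUnit Dᵀ.det := by rwa [det_transpose]
  calc D⁻¹ * D' * (D⁻¹ * D')ᵀ = D⁻¹ * (D' * D'ᵀ) * Dᵀ⁻¹ := by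
        rw [transpose_mul, transpose_nonsing_inv]; noncomm_ring
    _ = (D⁻¹ * D) * (Dᵀ * Dᵀ⁻¹) := by rw [← h]; noncomm_ring
    _ = 1 := by rw [nonsing_inv_mul _ hD, mul_nonsing_inv _ hDt, Matrix.one_mul]

end Matrix

noncomputable def g2Metric (a : ℝ) (D : Matrix (Fin 3) (Fin 3) ℝ) : Matrix (Fin 3) (Fin 3) ℝ :=
  (a ^ 2 / (D⁻¹).det ^ ((2:ℝ)/3)) • (D * Dᵀ)⁻¹

theorem det_g2Metric (a : ℝ) {D : Matrix (Fin 3) (Fin 3) ℝ} (hD : 0 < D.det) :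
    (g2Metric a D).det = a ^ 6 := by
  have hcube : (D.det⁻¹ ^ ((2:ℝ)/3)) ^ 3 = D.det⁻¹ ^ 2 := by
    rw [← Real.rpow_mul_natCast (inv_nonneg.2 hD.le)]
    norm_num
  rw [g2Metric, det_smul, Fintype.card_fin, det_inv_eq_inv_det, det_inv_eq_inv_det,
    det_mul_transpose_self, div_pow, hcube]
  field_simp [hD.ne']

theorem mul_transpose_eq_of_g2Metric_eq {a : ℝ} {D D' : Matrix (Fin 3) (Fin 3) ℝ} (ha : 0 < a)
    (hD : 0 < D.det) (hdet : D.det = D'.det) (h : g2Metric a D = g2Metric a D') :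
    D * Dᵀ = D' * D'ᵀ := by
  have hscale : a ^ 2 / (D⁻¹).det ^ ((2:ℝ)/3) ≠ 0 := by
    rw [det_inv_eq_inv_det]
    exact div_ne_zero (pow_ne_zero _ ha.ne') (Real.rpow_pos_of_pos (inv_pos.2 hD) _).ne'
  have hdet_inv : D⁻¹.det = D'⁻¹.det := by rw [det_inv_eq_inv_det, det_inv_eq_inv_det, hdet]
  rw [g2Metric, g2Metric, ← hdet_inv] at h
  refine inv_inj (smul_right_injective _ hscale h) ?_
  rw [det_mul_transpose_self]
  exact (pow_pos hD 2).ne'.isUnit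

theorem g2Metric_mul_of_orthogonal_of_det_eq_one (a : ℝ) (D : Matrix (Fin 3) (Fin 3) ℝ)
    {A : Matrix (Fin 3) (Fin 3) ℝ} (hA : A * Aᵀ = 1) (hAdet : A.det = 1) :
    g2Metric a (D * A) = g2Metric a D := by
  rw [g2Metric, g2Metric, mul_mul_transpose_eq_of_mul_transpose_eq_one D hA, det_inv_eq_inv_det,
    det_inv_eq_inv_det, det_mul, hAdet, mul_one]

theorem isometric_iff_SO3 (a a' : ℝ) (D D' : Matrix (Fin 3) (Fin 3) ℝ)
    (ha : 0 < a) (ha' : 0 < a') (hD : 0 < D.det) (hD' : 0 < D'.det) :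
    ((a^2 / (D⁻¹).det ^ ((2:ℝ)/3)) • (D * Dᵀ)⁻¹
        = (a'^2 / (D'⁻¹).det ^ ((2:ℝ)/3)) • (D' * D'ᵀ)⁻¹ ∧
      a'^3 * (D⁻¹).det = a^3 * (D'⁻¹).det)
    ↔ (a' = a ∧ ∃ A : Matrix (Fin 3) (Fin 3) ℝ, A * Aᵀ = 1 ∧ A.det = 1 ∧ D' = D * A) := by
  change g2Metric a D = g2Metric a' D' ∧ _ ↔ _
  rw [det_inv_eq_inv_det, det_inv_eq_inv_det]
  constructor
  · rintro ⟨hg, hvol⟩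
    have h6 : a ^ 6 = a' ^ 6 := by rw [← det_g2Metric a hD, ← det_g2Metric a' hD', hg]
    obtain rfl : a = a' := (pow_left_inj₀ ha.le ha'.le (by norm_num)).1 h6
    have hdet : D.det = D'.det := inv_injective (mul_left_cancel₀ (pow_pos ha 3).ne' hvol)
    refine ⟨rfl, D⁻¹ * D', inv_mul_mul_transpose_eq_one hD.ne'.isUnit
      (mul_transpose_eq_of_g2Metric_eq ha hD hdet hg), ?_, ?_⟩
    · rw [det_mul, det_inv_eq_inv_det, hdet, inv_mul_cancel₀ hD'.ne']
    · rw [← Matrix.mul_assoc, mul_nonsing_inv _ hD.ne'.isUnit, Matrix.one_mul]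
  · rintro ⟨rfl, A, hA, hAdet, rfl⟩
    rw [g2Metric_mul_of_orthogonal_of_det_eq_one _ D hA hAdet, det_mul, hAdet, mul_one]
    exact ⟨rfl, rfl⟩
end

section
/- Fix c ∈ ℝ, h2 ∈ (0,1) and hk ∈ ℝ. Let m2(t) = h2/√((1−h2²)e^{2ct}+h2²) and mk(t) = hk·e^{ct}/√((1−h2²)e^{2ct}+h2²). Then mk solves the ODE mk'(t) = c·mk(t)·m2(t)² with mk(0) = hk. -/
open Real

/-- Writing `D = A e^{2cs} + B`, one has `D' = 2c (D - B)`, so the logarithmic derivative of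
`e^{cs} / √D` is `c - c (D - B) / D = c B / D`. -/
theorem hasDerivAt_exp_mul_div_sqrt {A B c t : ℝ} (hD : 0 < A * exp (2 * c * t) + B) :
    HasDerivAt (fun s => exp (c * s) / √(A * exp (2 * c * s) + B))
      (c * (exp (c * t) / √(A * exp (2 * c * t) + B)) * (B / (A * exp (2 * c * t) + B))) t := by
  have hnum : HasDerivAt (fun s => exp (c * s)) (exp (c * t) * c) t := by
    simpa using ((hasDerivAt_id t).const_mul c).exp
  have hden : HasDerivAt (fun s => A * exp (2 * c * s) + B) (A * (exp (2 * c * t) * (2 * c))) t := by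
    simpa using ((((hasDerivAt_id t).const_mul (2 * c)).exp).const_mul A).add_const B
  have hS : 0 < √(A * exp (2 * c * t) + B) := sqrt_pos.2 hD
  have hS_sq : √(A * exp (2 * c * t) + B) ^ 2 = A * exp (2 * c * t) + B := sq_sqrt hD.le
  refine (hnum.div (hden.sqrt hD.ne') hS.ne').congr_deriv ?_
  generalize √(A * exp (2 * c * t) + B) = S at hS hS_sq ⊢
  generalize exp (2 * c * t) = E₂ at hS_sq ⊢
  rw [← hS_sq]
  field_simp
  linear_combination c * hS_sq

theorem mk_solves_ode (c h2 hk : ℝ) (h0 : 0 < h2) (h1 : h2 < 1) :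
    let m2 : ℝ → ℝ := fun t => h2 / Real.sqrt ((1 - h2^2) * Real.exp (2*c*t) + h2^2)
    let mk : ℝ → ℝ := fun t => hk * Real.exp (c*t) / Real.sqrt ((1 - h2^2) * Real.exp (2*c*t) + h2^2)
    mk 0 = hk ∧ ∀ t : ℝ, HasDerivAt mk (c * mk t * (m2 t)^2) t := by
  intro m2 mk
  have hD : ∀ t, 0 < (1 - h2 ^ 2) * exp (2 * c * t) + h2 ^ 2 := fun t =>
    add_pos (mul_pos (by nlinarith) (exp_pos _)) (by positivity)
  refine ⟨by simp [mk], fun t => ?_⟩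
  have h := (hasDerivAt_exp_mul_div_sqrt (hD t)).const_mul hk
  simp only [← mul_div_assoc] at h
  refine h.congr_deriv ?_
  simp only [mk, m2]
  rw [div_pow, sq_sqrt (hD t).le]
  ring
end

section
/- Fix c ∈ ℝ and let Ψ : ℝ⁴ → ℝ⁴ be given by Ψ(m) = c·m2·(m0m2, m1m2, −m0²−m1²−m3², m3m2) for m = (m0,m1,m2,m3). Then for every initial value h ∈ S³ the ODE m'(t) = Ψ(m(t)), m(0) = h, has a unique solution defined on all of ℝ, and this solution satisfies |m(t)| = 1 for all t. Moreover, if h2 = 0 the solution is constant, and if h = (0,0,±1,0) the solution is constant. -/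
noncomputable def Psi (c : ℝ) (m : Fin 4 → ℝ) : Fin 4 → ℝ :=
  (c * m 2) •
    ![m 0 * m 2, m 1 * m 2, -(m 0)^2 - (m 1)^2 - (m 3)^2, m 3 * m 2]

/-!
With `L = diag(0, 0, -c, 0)` one has `Ψ(m) = |m|² L m - ⟨m, L m⟩ m`. This field is orthogonal
to `m`, so `|m|` is conserved along solutions, and it is polynomial, hence locally Lipschitz:
solutions starting on the sphere stay in a compact set, where they are unique. On the sphere `Ψ`
is the tangential part of `L m`, so the radial projection `u / |u|` of the linear flow
`u(t) = e^{tL} h` is a global solution. Zeros of `Ψ` (`h₂ = 0`, `h = ±e₂`) give constant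
solutions.
-/

open Matrix Metric Set

variable {ι : Type*} [Fintype ι]

theorem HasDerivAt.dotProduct {u v : ℝ → ι → ℝ} {u' v' : ι → ℝ} {t : ℝ}
    (hu : HasDerivAt u u' t) (hv : HasDerivAt v v' t) :
    HasDerivAt (fun s => u s ⬝ᵥ v s) (u' ⬝ᵥ v t + u t ⬝ᵥ v') t := by
  refine HasDerivAt.congr_deriv (f := fun s => u s ⬝ᵥ v s) (HasDerivAt.fun_sum
    (u := Finset.univ) fun i _ => (hasDerivAt_pi.1 hu i).fun_mul (hasDerivAt_pi.1 hv i)) ?_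
  exact Finset.sum_add_distrib

theorem HasDerivAt.dotProduct_self {u : ℝ → ι → ℝ} {u' : ι → ℝ} {t : ℝ}
    (hu : HasDerivAt u u' t) :
    HasDerivAt (fun s => u s ⬝ᵥ u s) (2 * (u t ⬝ᵥ u')) t := by
  convert hu.dotProduct hu using 1
  rw [dotProduct_comm u']; ring

def projectedLinearField (L : Matrix ι ι ℝ) (x : ι → ℝ) : ι → ℝ :=
  (x ⬝ᵥ x) • L *ᵥ x - (x ⬝ᵥ L *ᵥ x) • x

theorem hasDerivAt_normalize {L : Matrix ι ι ℝ} {u : ℝ → ι → ℝ} {t : ℝ}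
    (hu : HasDerivAt u (L *ᵥ u t) t) (hut : u t ≠ 0) :
    HasDerivAt (fun s => (√(u s ⬝ᵥ u s))⁻¹ • u s)
      (projectedLinearField L ((√(u t ⬝ᵥ u t))⁻¹ • u t)) t := by
  have hN : 0 < u t ⬝ᵥ u t := by simpa using dotProduct_self_star_pos_iff.2 hut
  have hsqrt : √(u t ⬝ᵥ u t) ≠ 0 := Real.sqrt_ne_zero'.2 hN
  refine HasDerivAt.congr_deriv (f := fun s => (√(u s ⬝ᵥ u s))⁻¹ • u s)
    ((((hu.dotProduct_self).sqrt hN.ne').inv hsqrt).smul hu) ?_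
  have hsq := Real.sq_sqrt hN.le
  ext i
  simp only [projectedLinearField, dotProduct_smul, smul_dotProduct, mulVec_smul, smul_smul,
    smul_eq_mul, Pi.sub_apply, Pi.add_apply, Pi.smul_apply, Pi.inv_apply]
  generalize √(u t ⬝ᵥ u t) = r at hsqrt hsq ⊢
  rw [← hsq]
  field_simp
  ring

theorem dotProduct_projectedLinearField (L : Matrix ι ι ℝ) (x : ι → ℝ) :
    x ⬝ᵥ projectedLinearField L x = 0 := by
  simp only [projectedLinearField, dotProduct_sub, dotProduct_smul, smul_eq_mul]
  ring

theorem contDiff_projectedLinearField (L : Matrix ι ι ℝ) :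
    ContDiff ℝ 1 (projectedLinearField L) := by
  refine contDiff_pi.2 fun i => ?_
  simp only [projectedLinearField, dotProduct, mulVec, Pi.sub_apply, Pi.smul_apply, smul_eq_mul]
  fun_prop

theorem dotProduct_self_eq_of_hasDerivAt {v : (ι → ℝ) → ι → ℝ} (hv : ∀ x, x ⬝ᵥ v x = 0)
    {m : ℝ → ι → ℝ} (hm : ∀ t, HasDerivAt m (v (m t)) t) (t : ℝ) :
    m t ⬝ᵥ m t = m 0 ⬝ᵥ m 0 := by
  have hderiv : ∀ s, HasDerivAt (fun s => m s ⬝ᵥ m s) 0 s := fun s => by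
    simpa [hv] using (hm s).dotProduct_self
  exact is_const_of_deriv_eq_zero (fun s => (hderiv s).differentiableAt)
    (fun s => (hderiv s).deriv) t 0

theorem norm_le_one_of_dotProduct_self_eq_one {x : ι → ℝ} (hx : x ⬝ᵥ x = 1) : ‖x‖ ≤ 1 := by
  refine (pi_norm_le_iff_of_nonneg zero_le_one).2 fun i => ?_
  rw [Real.norm_eq_abs, ← sq_le_one_iff_abs_le_one, ← hx, sq]
  exact Finset.single_le_sum (f := fun i => x i * x i) (fun i _ => mul_self_nonneg (x i))
    (Finset.mem_univ i)

theorem ODE_solution_unique_of_mem_isCompact {E : Type*} [NormedAddCommGroup E] [NormedSpace ℝ E]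
    {v : E → E} (hv : LocallyLipschitz v) {s : Set E} (hs : IsCompact s) {f g : ℝ → E}
    (hf : ∀ t, HasDerivAt f (v (f t)) t) (hg : ∀ t, HasDerivAt g (v (g t)) t)
    (hfs : ∀ t, f t ∈ s) (hgs : ∀ t, g t ∈ s) (h0 : f 0 = g 0) : f = g := by
  obtain ⟨K, hK⟩ := hv.locallyLipschitzOn.exists_lipschitzOnWith_of_compact hs
  funext t
  have ht : t ∈ Ioo (-(|t| + 1)) (|t| + 1) := by
    constructor <;> linarith [neg_abs_le t, le_abs_self t]
  refine ODE_solution_unique_of_mem_Ioo (v := fun _ => v) (s := fun _ => s) (t₀ := 0)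
    (fun _ _ => hK) ⟨by linarith [abs_nonneg t], by linarith [abs_nonneg t]⟩
    (fun t _ => ⟨hf t, hfs t⟩) (fun t _ => ⟨hg t, hgs t⟩) h0 ht

theorem projectedLinearField_solution_unique (L : Matrix ι ι ℝ) {h : ι → ℝ} (hh : h ⬝ᵥ h = 1)
    {f g : ℝ → ι → ℝ} (hf0 : f 0 = h) (hf : ∀ t, HasDerivAt f (projectedLinearField L (f t)) t)
    (hg0 : g 0 = h) (hg : ∀ t, HasDerivAt g (projectedLinearField L (g t)) t) : f = g := by
  have hball {m : ℝ → ι → ℝ} (hm0 : m 0 = h)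
      (hm : ∀ t, HasDerivAt m (projectedLinearField L (m t)) t) (t : ℝ) : m t ∈ closedBall 0 1 :=
    mem_closedBall_zero_iff.2 <| norm_le_one_of_dotProduct_self_eq_one <| by
      rw [dotProduct_self_eq_of_hasDerivAt (dotProduct_projectedLinearField L) hm, hm0, hh]
  exact ODE_solution_unique_of_mem_isCompact (contDiff_projectedLinearField L).locallyLipschitz
    (isCompact_closedBall 0 1) hf hg (hball hf0 hf) (hball hg0 hg) (hf0.trans hg0.symm)

theorem eq_const_of_projectedLinearField_eq_zero {L : Matrix ι ι ℝ} {h : ι → ℝ}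
    (hh : h ⬝ᵥ h = 1) (hL : projectedLinearField L h = 0) {m : ℝ → ι → ℝ} (hm0 : m 0 = h)
    (hm : ∀ t, HasDerivAt m (projectedLinearField L (m t)) t) (t : ℝ) : m t = h :=
  congrFun (projectedLinearField_solution_unique (g := fun _ => h) L hh hm0 hm rfl fun t => by
    simpa [hL] using hasDerivAt_const t h) t

theorem hasDerivAt_exp_diagonal [DecidableEq ι] (d h : ι → ℝ) (t : ℝ) :
    HasDerivAt (fun s i => Real.exp (s * d i) * h i)
      (diagonal d *ᵥ fun i => Real.exp (t * d i) * h i) t := by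
  refine hasDerivAt_pi.2 fun i => ?_
  refine ((((hasDerivAt_id t).mul_const (d i)).exp).mul_const (h i)).congr_deriv ?_
  simp only [mulVec_diagonal, id, one_mul]
  ring

theorem exists_hasDerivAt_projectedLinearField_diagonal [DecidableEq ι] (d : ι → ℝ) {h : ι → ℝ}
    (hh : h ⬝ᵥ h = 1) :
    ∃ m : ℝ → ι → ℝ, m 0 = h ∧ ∀ t, HasDerivAt m (projectedLinearField (diagonal d) (m t)) t := by
  set u : ℝ → ι → ℝ := fun s i => Real.exp (s * d i) * h i
  have hu0 : u 0 = h := by ext i; simp [u]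
  have hu (t : ℝ) : u t ≠ 0 := by
    obtain ⟨i, hi⟩ : ∃ i, h i ≠ 0 := Function.ne_iff.1 fun h0 => by simp [h0] at hh
    exact Function.ne_iff.2 ⟨i, mul_ne_zero (Real.exp_pos _).ne' hi⟩
  refine ⟨fun s => (√(u s ⬝ᵥ u s))⁻¹ • u s, by simp [hu0, hh], fun t => ?_⟩
  exact hasDerivAt_normalize (hasDerivAt_exp_diagonal d h t) (hu t)

theorem Psi_eq_projectedLinearField (c : ℝ) :
    Psi c = projectedLinearField (diagonal ![0, 0, -c, 0]) := by
  ext m i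
  fin_cases i <;>
    simp [Psi, projectedLinearField, dotProduct, Fin.sum_univ_four, mulVec_diagonal] <;> ring

theorem sq_add_sq_add_sq_add_sq_eq_dotProduct (x : Fin 4 → ℝ) :
    x 0 ^ 2 + x 1 ^ 2 + x 2 ^ 2 + x 3 ^ 2 = x ⬝ᵥ x := by
  simp [dotProduct, Fin.sum_univ_four, sq]

theorem flow_global_existence_uniqueness (c : ℝ) :
    ∀ h : Fin 4 → ℝ, (h 0)^2 + (h 1)^2 + (h 2)^2 + (h 3)^2 = 1 →
      (∃! m : ℝ → (Fin 4 → ℝ),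
        m 0 = h ∧ ∀ t : ℝ, HasDerivAt m (Psi c (m t)) t) ∧
      ∀ m : ℝ → (Fin 4 → ℝ),
        (m 0 = h ∧ ∀ t : ℝ, HasDerivAt m (Psi c (m t)) t) →
          ((∀ t : ℝ, (m t 0)^2 + (m t 1)^2 + (m t 2)^2 + (m t 3)^2 = 1) ∧
           (h 2 = 0 → ∀ t : ℝ, m t = h) ∧
           ((h = ![0, 0, 1, 0] ∨ h = ![0, 0, -1, 0]) → ∀ t : ℝ, m t = h)) := by
  intro h hn
  have hzero : (h 2 = 0 ∨ h = ![0, 0, 1, 0] ∨ h = ![0, 0, -1, 0]) → Psi c h = 0 := by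
    rintro (h2 | rfl | rfl) <;> simp [Psi, *]
  simp only [sq_add_sq_add_sq_add_sq_eq_dotProduct] at hn ⊢
  rw [Psi_eq_projectedLinearField] at hzero ⊢
  obtain ⟨m₀, hm₀0, hm₀⟩ := exists_hasDerivAt_projectedLinearField_diagonal ![0, 0, -c, 0] hn
  refine ⟨⟨m₀, ⟨hm₀0, hm₀⟩, fun m hm => ?_⟩,
    fun m ⟨hm0, hm⟩ => ⟨fun t => ?_, fun h2 => ?_, fun he => ?_⟩⟩
  · exact projectedLinearField_solution_unique _ hn hm.1 hm.2 hm₀0 hm₀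
  · rw [dotProduct_self_eq_of_hasDerivAt (dotProduct_projectedLinearField _) hm, hm0, hn]
  · exact eq_const_of_projectedLinearField_eq_zero hn (hzero (.inl h2)) hm0 hm
  · exact eq_const_of_projectedLinearField_eq_zero hn (hzero (.inr he)) hm0 hm
end
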